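/- arXiv:1904.08921 — 3 statements merged into one kernel-verified Lean document; each statement's English description precedes it below -/
import Mathlib

section
/- Let b ∈ ℝ³ with b_i > 0 for each coordinate i, let K = {x ∈ ℝ³ : |x_i| ≤ b_i for all i} be the axis-aligned solid cuboid centered at the origin with half-extents b, and for p ∈ ℝ³ define d ∈ ℝ³ by d_i = |p_i| − b_i. Then the signed distance of p to K satisfies sdf_K(p) = √( Σ_i max(d_i, 0)² ) + min( max(d_1, d_2, d_3), 0 ). -/
open Classical in
/-- Signed distance to a solid K: negative (minus distance to the complement) inside,
and distance to K outside. -/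
noncomputable def sdf {n : ℕ} (K : Set (EuclideanSpace ℝ (Fin n)))
    (p : EuclideanSpace ℝ (Fin n)) : ℝ :=
  if p ∈ K then -Metric.infDist p Kᶜ else Metric.infDist p K

private lemma le_infDist' {s : Set (EuclideanSpace ℝ (Fin 3))} (hs : s.Nonempty)
    {x : EuclideanSpace ℝ (Fin 3)} {c : ℝ} (h : ∀ y ∈ s, c ≤ dist x y) :
    c ≤ Metric.infDist x s := by
  by_contra hc
  push_neg at hc
  obtain ⟨y, hy, hlt⟩ := (Metric.infDist_lt_iff hs).1 hc
  exact absurd (h y hy) (not_le.2 hlt)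

private lemma coord_dist_le {n : ℕ} (x y : EuclideanSpace ℝ (Fin n)) (i : Fin n) :
    dist (x i) (y i) ≤ dist x y := by
  rw [EuclideanSpace.dist_eq]
  calc dist (x i) (y i) = Real.sqrt (dist (x i) (y i) ^ 2) := (Real.sqrt_sq dist_nonneg).symm
    _ ≤ _ := Real.sqrt_le_sqrt
        (Finset.single_le_sum (fun j _ => sq_nonneg (dist (x j) (y j))) (Finset.mem_univ i))

/-- The signed distance from p to the axis-aligned solid cuboid K = {x : |xᵢ| ≤ bᵢ} (bᵢ > 0),
with dᵢ = |pᵢ| − bᵢ, equals √(Σᵢ max(dᵢ,0)²) + min(max(d₁,d₂,d₃), 0). -/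
theorem cuboid_sdf (b p : EuclideanSpace ℝ (Fin 3)) (hb : ∀ i, 0 < b i)
    (d : Fin 3 → ℝ) (hd : ∀ i, d i = |p i| - b i) :
    sdf {x : EuclideanSpace ℝ (Fin 3) | ∀ i, |x i| ≤ b i} p =
      Real.sqrt (∑ i, max (d i) 0 ^ 2) + min (max (d 0) (max (d 1) (d 2))) 0 := by
  set K : Set (EuclideanSpace ℝ (Fin 3)) := {x | ∀ i, |x i| ≤ b i} with hK
  set M := max (d 0) (max (d 1) (d 2)) with hM
  have hdM : ∀ i, d i ≤ M := by
    intro i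
    fin_cases i
    · exact le_max_left _ _
    · exact le_trans (le_max_left _ _) (le_max_right _ _)
    · exact le_trans (le_max_right _ _) (le_max_right _ _)
  obtain ⟨j, hj⟩ : ∃ j, M = d j := by
    rcases max_cases (d 0) (max (d 1) (d 2)) with ⟨h, -⟩ | ⟨h, -⟩
    · exact ⟨0, h⟩
    · rcases max_cases (d 1) (d 2) with ⟨h2, -⟩ | ⟨h2, -⟩
      · exact ⟨1, by rw [hM, h, h2]⟩
      · exact ⟨2, by rw [hM, h, h2]⟩
  have hKne : K.Nonempty := ⟨0, fun i => by simp [le_of_lt (hb i)]⟩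
  by_cases hp : p ∈ K
  · -- inside
    have hdle : ∀ i, d i ≤ 0 := fun i => by
      rw [hd i]; linarith [hp i]
    have hM0 : M ≤ 0 := hj ▸ hdle j
    have hs0 : Real.sqrt (∑ i, max (d i) 0 ^ 2) = 0 := by
      have : ∀ i ∈ Finset.univ, max (d i) 0 ^ 2 = 0 := fun i _ => by
        rw [max_eq_right (hdle i)]; ring
      rw [Finset.sum_congr rfl this]
      simp
    rw [sdf, if_pos hp, hs0, min_eq_left hM0, zero_add]
    have key : Metric.infDist p Kᶜ = -M := by
      apply le_antisymm
      · -- upper bound via points just outside in coordinate j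
        apply le_of_forall_pos_le_add
        intro ε hε
        have hpj : -(b j) ≤ p j ∧ p j ≤ b j := abs_le.1 (hp j)
        set v : ℝ := if 0 ≤ p j then b j + ε else -(b j + ε) with hvdef
        set y : EuclideanSpace ℝ (Fin 3) := WithLp.toLp 2 (Function.update p j v) with hy
        have hyc : y ∈ Kᶜ := by
          intro hyK
          have := hyK j
          have hyj : y j = v := Function.update_self j v p
          rw [hyj] at this
          rcases le_or_gt 0 (p j) with h0 | h0
          · rw [hvdef, if_pos h0, abs_of_pos (by linarith [hb j])] at this; linarith
          · rw [hvdef, if_neg (not_le.2 h0), abs_neg, abs_of_pos (by linarith [hb j])] at this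
            linarith
        have hdist : dist p y = b j - |p j| + ε := by
          rw [EuclideanSpace.dist_eq]
          have hsum : ∑ i, dist (p i) (y i) ^ 2 = dist (p j) v ^ 2 := by
            rw [Finset.sum_eq_single j]
            · rw [hy]; simp only [WithLp.ofLp_toLp, Function.update_self]
            · intro i _ hij
              rw [hy]; simp only [WithLp.ofLp_toLp, Function.update_of_ne hij]
              simp
            · intro h; exact absurd (Finset.mem_univ j) h
          rw [hsum, Real.sqrt_sq dist_nonneg, Real.dist_eq]
          rcases le_or_gt 0 (p j) with h0 | h0
          · rw [hvdef, if_pos h0, abs_of_nonpos (by linarith [hpj.2]),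
              abs_of_nonneg h0]
            ring
          · rw [hvdef, if_neg (not_le.2 h0), abs_of_nonneg (by linarith [hpj.1]),
              abs_of_neg h0]
            ring
        calc Metric.infDist p Kᶜ ≤ dist p y := Metric.infDist_le_dist_of_mem hyc
          _ = -M + ε := by rw [hdist, hj, hd j]; ring
      · -- lower bound
        have hcne : Kᶜ.Nonempty := by
          refine ⟨WithLp.toLp 2 (fun i => b i + 1), fun hmem => ?_⟩
          have h1 : |b 0 + 1| ≤ b 0 := hmem 0
          rw [abs_of_pos (by linarith [hb 0])] at h1
          linarith
        apply le_infDist' hcne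
        intro x hx
        have : ¬ ∀ i, |x i| ≤ b i := hx
        push_neg at this
        obtain ⟨i, hi⟩ := this
        have h1 : -M ≤ b i - |p i| := by linarith [hdM i, hd i]
        have h2 : |x i| - |p i| ≤ dist (p i) (x i) := by
          rw [Real.dist_eq, abs_sub_comm]
          exact le_trans (abs_sub_abs_le_abs_sub _ _) (le_refl _)
        calc -M ≤ b i - |p i| := h1
          _ ≤ |x i| - |p i| := by linarith
          _ ≤ dist (p i) (x i) := h2
          _ ≤ dist p x := coord_dist_le p x i
    rw [key]; ring
  · -- outside
    have hex : ∃ i, b i < |p i| := by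
      by_contra h
      push_neg at h
      exact hp (fun i => h i)
    obtain ⟨i0, hi0⟩ := hex
    have hMpos : 0 < M := lt_of_lt_of_le (by rw [hd i0]; linarith) (hdM i0)
    rw [sdf, if_neg hp, min_eq_right hMpos.le, add_zero]
    set q : EuclideanSpace ℝ (Fin 3) := WithLp.toLp 2 (fun i => max (-(b i)) (min (p i) (b i))) with hq
    have hqK : q ∈ K := by
      intro i
      rw [abs_le]
      constructor
      · exact le_max_left _ _
      · exact max_le (by linarith [hb i]) (min_le_right _ _)
    have hqd : ∀ i, dist (p i) (q i) = max (d i) 0 := by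
      intro i
      have hbi := hb i
      rw [Real.dist_eq, hd i]
      rcases lt_or_ge (b i) (p i) with h1 | h1
      · have : q i = b i := by
          rw [hq]
          simp only [PiLp.toLp_apply, min_eq_right h1.le]
          exact max_eq_right (by linarith)
        rw [this, abs_of_pos (by linarith), abs_of_pos (by linarith),
          max_eq_left (by linarith)]
      · rcases lt_or_ge (p i) (-(b i)) with h2 | h2
        · have : q i = -(b i) := by
            rw [hq]
            simp only [PiLp.toLp_apply, min_eq_left (by linarith : p i ≤ b i)]
            exact max_eq_left h2.le
          rw [this, abs_of_neg (by linarith : p i < 0)]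
          rw [abs_of_neg (by linarith : p i - -(b i) < 0)]
          rw [max_eq_left (by linarith)]
          ring
        · have : q i = p i := by
            rw [hq]
            simp only [PiLp.toLp_apply, min_eq_left h1]
            exact max_eq_right h2
          rw [this, sub_self, abs_zero, max_eq_right (by
            rcases le_or_gt 0 (p i) with h3 | h3
            · rw [abs_of_nonneg h3]; linarith
            · rw [abs_of_neg h3]; linarith)]
    apply le_antisymm
    · calc Metric.infDist p K ≤ dist p q := Metric.infDist_le_dist_of_mem hqK
        _ = Real.sqrt (∑ i, max (d i) 0 ^ 2) := by
          rw [EuclideanSpace.dist_eq]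
          congr 1
          exact Finset.sum_congr rfl fun i _ => by rw [hqd i]
    · apply le_infDist' hKne
      intro y hy
      rw [EuclideanSpace.dist_eq]
      apply Real.sqrt_le_sqrt
      apply Finset.sum_le_sum
      intro i _
      have hbound : max (d i) 0 ≤ dist (p i) (y i) := by
        rcases le_or_gt (d i) 0 with h1 | h1
        · rw [max_eq_right h1]; exact dist_nonneg
        · rw [max_eq_left h1.le, hd i, Real.dist_eq]
          calc |p i| - b i ≤ |p i| - |y i| := by linarith [hy i]
            _ ≤ |p i - y i| := abs_sub_abs_le_abs_sub _ _
      exact pow_le_pow_left₀ (le_max_right _ _) hbound 2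
end

section
/- Let A, B ⊆ ℝⁿ be nonempty compact sets, each regular closed, i.e., A equals the closure of its interior and B equals the closure of its interior. Then the symmetric variational Chamfer energy ∫_A infDist(x, B)² dx + ∫_B infDist(x, A)² dx (integrals with respect to Lebesgue measure) equals 0 if and only if A = B. -/
/-!
If the energy vanishes, both (nonnegative) integrals vanish. A continuous nonnegative function
with zero integral over `A` vanishes on the open set `interior A`, so `infDist · B = 0` there,
i.e. `interior A ⊆ closure B = B`; regular closedness of `A` then gives `A ⊆ B`, and
symmetrically `B ⊆ A`.
-/

open MeasureTheory Metric

lemma eqOn_zero_interior_of_setIntegral_eq_zero {X : Type*} [TopologicalSpace X]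
    [MeasurableSpace X] {μ : Measure X} [μ.IsOpenPosMeasure] {f : X → ℝ} {s : Set X}
    (hf : ContinuousOn f (interior s)) (hf0 : 0 ≤ f) (hfs : IntegrableOn f s μ)
    (h : ∫ x in s, f x ∂μ = 0) : Set.EqOn f 0 (interior s) := by
  have hae : f =ᵐ[μ.restrict s] 0 :=
    (setIntegral_eq_zero_iff_of_nonneg_ae (.of_forall hf0) hfs).1 h
  exact Measure.eqOn_open_of_ae_eq (ae_restrict_of_ae_restrict_of_subset interior_subset hae)
    isOpen_interior hf continuousOn_const

lemma subset_of_setIntegral_infDist_sq_eq_zero {X : Type*} [MetricSpace X] [MeasurableSpace X]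
    [OpensMeasurableSpace X] {μ : Measure X} [μ.IsOpenPosMeasure] [IsFiniteMeasureOnCompacts μ]
    {A B : Set X} (hAc : IsCompact A) (hAr : A ⊆ closure (interior A)) (hB : B.Nonempty)
    (hBc : IsClosed B) (h : ∫ x in A, infDist x B ^ 2 ∂μ = 0) : A ⊆ B := by
  have hcont : Continuous fun x => infDist x B ^ 2 := (continuous_infDist_pt B).pow 2
  have hzero := eqOn_zero_interior_of_setIntegral_eq_zero hcont.continuousOn
    (fun x => sq_nonneg _) (hcont.continuousOn.integrableOn_compact hAc) h
  have hint : interior A ⊆ B := fun x hx => by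
    rw [← hBc.closure_eq, mem_closure_iff_infDist_zero hB]
    exact pow_eq_zero_iff two_ne_zero |>.1 (hzero hx)
  exact hAr.trans (hBc.closure_subset_iff.2 hint)

/-- For nonempty compact regular-closed sets A and B, the symmetric variational Chamfer
energy ∫_A d_B(x)² dx + ∫_B d_A(x)² dx vanishes iff A = B. -/
theorem chamfer_symm_eq_zero_iff {n : ℕ} (A B : Set (EuclideanSpace ℝ (Fin n)))
    (hA : A.Nonempty) (hB : B.Nonempty) (hAc : IsCompact A) (hBc : IsCompact B)
    (hAr : A = closure (interior A)) (hBr : B = closure (interior B)) :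
    ((∫ x in A, Metric.infDist x B ^ 2) + (∫ x in B, Metric.infDist x A ^ 2)) = 0 ↔ A = B := by
  constructor
  · intro h
    obtain ⟨hAB, hBA⟩ := (add_eq_zero_iff_of_nonneg
      (setIntegral_nonneg_of_ae (.of_forall fun _ => sq_nonneg _))
      (setIntegral_nonneg_of_ae (.of_forall fun _ => sq_nonneg _))).1 h
    exact (subset_of_setIntegral_infDist_sq_eq_zero hAc hAr.subset hB hBc.isClosed hAB).antisymm
      (subset_of_setIntegral_infDist_sq_eq_zero hBc hBr.subset hA hAc.isClosed hBA)
  · rintro rfl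
    have hself : ∫ x in A, infDist x A ^ 2 = 0 :=
      setIntegral_eq_zero_of_forall_eq_zero fun x hx => by simp [infDist_zero_of_mem hx]
    rw [hself, add_zero]
end

section
/- Let A ⊆ ℝⁿ be a nonempty compact regular closed set (A equals the closure of its interior) and let B ⊆ ℝⁿ be a nonempty closed set. Then the directed variational Chamfer energy ∫_A infDist(x, B)² dx (integral with respect to Lebesgue measure) equals 0 if and only if A ⊆ B. -/
/-- For a nonempty compact regular-closed set A and a nonempty closed set B, the directed
variational Chamfer energy ∫_A d_B(x)² dx vanishes iff A ⊆ B. -/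
theorem chamfer_dir_eq_zero_iff {n : ℕ} (A B : Set (EuclideanSpace ℝ (Fin n)))
    (hA : A.Nonempty) (hB : B.Nonempty) (hAc : IsCompact A)
    (hAr : A = closure (interior A)) (hBclosed : IsClosed B) :
    (∫ x in A, Metric.infDist x B ^ 2) = 0 ↔ A ⊆ B := by
  have hcont : Continuous fun x : EuclideanSpace ℝ (Fin n) => Metric.infDist x B ^ 2 :=
    (Metric.continuous_infDist_pt B).pow 2
  have hinteg : MeasureTheory.IntegrableOn
      (fun x : EuclideanSpace ℝ (Fin n) => Metric.infDist x B ^ 2) A :=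
    hcont.continuousOn.integrableOn_compact hAc
  constructor
  · intro h
    have hintB : interior A ⊆ B := by
      by_contra hc
      obtain ⟨x, hxA, hxB⟩ := Set.not_subset.mp hc
      have hd : 0 < Metric.infDist x B :=
        (hBclosed.notMem_iff_infDist_pos hB).mp hxB
      set d := Metric.infDist x B with hdd
      set U : Set (EuclideanSpace ℝ (Fin n)) :=
        interior A ∩ {y | d / 2 < Metric.infDist y B} with hU
      have hUopen : IsOpen U :=
        isOpen_interior.inter (isOpen_lt continuous_const (Metric.continuous_infDist_pt B))
      have hxU : x ∈ U := ⟨hxA, by simp; linarith⟩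
      have hUpos : 0 < MeasureTheory.volume U :=
        hUopen.measure_pos _ ⟨x, hxU⟩
      have hUA : U ⊆ A := fun y hy => interior_subset hy.1
      have hUfin : MeasureTheory.volume U ≠ ⊤ :=
        ((MeasureTheory.measure_mono hUA).trans_lt hAc.measure_lt_top).ne
      have hlow : (d / 2) ^ 2 * (MeasureTheory.volume U).toReal ≤
          ∫ y in U, Metric.infDist y B ^ 2 := by
        rw [mul_comm, ← MeasureTheory.measureReal_def, ← smul_eq_mul]
        apply MeasureTheory.setIntegral_ge_of_const_le hUopen.measurableSet hUfin
        · intro y hy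
          have := hy.2
          have h2 : d / 2 ≤ Metric.infDist y B := le_of_lt this
          exact pow_le_pow_left₀ (by positivity) h2 2
        · exact hinteg.mono_set hUA
      have hmono : (∫ y in U, Metric.infDist y B ^ 2) ≤ ∫ x in A, Metric.infDist x B ^ 2 := by
        apply MeasureTheory.setIntegral_mono_set hinteg
        · exact MeasureTheory.ae_of_all _ fun y => by positivity
        · exact HasSubset.Subset.eventuallyLE hUA
      have : 0 < (d / 2) ^ 2 * (MeasureTheory.volume U).toReal := by
        apply mul_pos (by positivity)
        exact ENNReal.toReal_pos hUpos.ne' hUfin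
      linarith
    intro x hx
    rw [hAr] at hx
    have : x ∈ closure B := closure_mono hintB hx
    rwa [hBclosed.closure_eq] at this
  · intro h
    calc (∫ x in A, Metric.infDist x B ^ 2)
        = ∫ _x in A, (0 : ℝ) := MeasureTheory.setIntegral_congr_fun hAc.measurableSet
          (fun x hx => by simp [Metric.infDist_zero_of_mem (h hx)])
      _ = 0 := by simp
end
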